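/- Let m ≥ 1 be an integer and let B_m be the (m+1)×(m+1) real matrix defined below. Then det B_m ≠ 0, i.e., B_m is nonsingular. -/

import Mathlib

/-!
Read a vector `v` in the kernel of `B_m` as the coefficient vector of a polynomial `g` of degree at
most `m`. Rows `1, …, m` of `B_m v` are the coefficients of `X, …, X^m` in
`L g = (2 + 3X - X²) g' + (mX + 4 - m) g`, whose higher coefficients vanish because `deg g ≤ m`;
so `L g` is constant, and row `0` says that `(L g)(1) = 4 (g(1) + g'(1))` vanishes. Hence `L g = 0`.
This first-order equation is singular at the root `α = (3 - √17) / 2` of `2 + 3X - X²`, and its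
indicial equation ties the multiplicity `n` of `α` as a root of `g` to the coefficients:
`-(mα + 4 - m) = n √17`, that is `(m - 2n) √17 = m + 8`, contradicting the irrationality of `√17`.
-/

/-- The matrix `B_m` of the paper: first row `(B_m)_{0,j} = j + 1`, and for
`1 ≤ i ≤ m`: `(B_m)_{i,i} = 3i + 4 - m`, `(B_m)_{i,i-1} = m + 1 - i`,
`(B_m)_{i,i+1} = 2(i+1)`, all other entries `0`. -/
noncomputable def paperB (m : ℕ) : Matrix (Fin (m + 1)) (Fin (m + 1)) ℝ :=
  Matrix.of fun i j =>
    if (i : ℕ) = 0 then ((j : ℕ) : ℝ) + 1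
    else if (i : ℕ) = (j : ℕ) then 3 * ((i : ℕ) : ℝ) + 4 - (m : ℝ)
    else if (i : ℕ) = (j : ℕ) + 1 then (m : ℝ) + 1 - ((i : ℕ) : ℝ)
    else if (j : ℕ) = (i : ℕ) + 1 then 2 * (((i : ℕ) : ℝ) + 1)
    else 0

open Polynomial Matrix

namespace Polynomial

variable {R : Type*} [CommRing R] [IsDomain R]

theorem eval_eq_rootMultiplicity_mul_of_X_sub_C_mul_derivative {p r s : R[X]} {a : R}
    (hp : p ≠ 0) (h : (X - C a) * r * derivative p = s * p) :
    s.eval a = p.rootMultiplicity a * r.eval a := by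
  obtain ⟨q, hpq, hq⟩ := p.exists_eq_pow_rootMultiplicity_mul_and_not_dvd hp a
  set n := p.rootMultiplicity a
  have hX : (X - C a) * derivative ((X - C a) ^ n) = C (n : R) * (X - C a) ^ n := by
    rcases n with _ | n
    · simp
    · rw [derivative_X_sub_C_pow]; push_cast; ring
  have hcancel : (X - C a) ^ n * (r * (C (n : R) * q + (X - C a) * derivative q) - s * q) = 0 := by
    rw [hpq, derivative_mul] at h
    linear_combination h - r * q * hX
  have hq' := (mul_eq_zero.mp hcancel).resolve_left (pow_ne_zero _ (X_sub_C_ne_zero a))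
  have hqa : q.eval a ≠ 0 := fun h0 => hq (dvd_iff_isRoot.mpr h0)
  have := congrArg (eval a) hq'
  simp only [eval_sub, eval_mul, eval_add, eval_C, eval_X, sub_self, zero_mul, add_zero, eval_zero] at this
  apply mul_right_cancel₀ hqa
  linear_combination -this

/-- The indicial equation of `r p' = s p` at a singular point `a`. -/
theorem eval_eq_rootMultiplicity_mul_eval_derivative {p r s : R[X]} {a : R}
    (hp : p ≠ 0) (hr : r.IsRoot a) (h : r * derivative p = s * p) :
    s.eval a = p.rootMultiplicity a * (derivative r).eval a := by
  rw [← mul_divByMonic_eq_iff_isRoot.mpr hr] at h ⊢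
  rw [eval_eq_rootMultiplicity_mul_of_X_sub_C_mul_derivative hp h, derivative_mul]
  simp

end Polynomial

noncomputable def paperBOp (m : ℕ) (g : ℝ[X]) : ℝ[X] :=
  (C 2 + C 3 * X - X ^ 2) * derivative g + (C (m : ℝ) * X + C (4 - m : ℝ)) * g

theorem coeff_paperBOp_succ (m k : ℕ) (g : ℝ[X]) :
    (paperBOp m g).coeff (k + 1) = (m - k) * g.coeff k + (3 * (k + 1) + 4 - m) * g.coeff (k + 1)
      + 2 * (k + 2) * g.coeff (k + 2) := by
  have hsplit : paperBOp m g = C 2 * derivative g + C 3 * (X * derivative g)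
      - X ^ 2 * derivative g + C (m : ℝ) * (X * g) + C (4 - m : ℝ) * g := by
    unfold paperBOp; ring
  rw [hsplit]
  simp only [coeff_add, coeff_sub, coeff_C_mul, coeff_X_mul, coeff_X_pow_mul', coeff_derivative]
  rcases k with _ | k
  · norm_num
    ring
  · rw [if_pos (by omega), show k + 1 + 1 - 2 = k by omega]
    push_cast
    ring

theorem eval_one_paperBOp (m : ℕ) (g : ℝ[X]) :
    (paperBOp m g).eval 1 = 4 * (g.eval 1 + (derivative g).eval 1) := by
  simp only [paperBOp, map_natCast, map_sub, eval_add, eval_mul, eval_sub, eval_C, eval_X, mul_one,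
    eval_pow, one_pow, eval_natCast]
  ring

theorem paperBOp_ne_zero (m : ℕ) {g : ℝ[X]} (hg : g ≠ 0) : paperBOp m g ≠ 0 := by
  intro hL
  have ht : √17 ^ 2 = 17 := Real.sq_sqrt (by norm_num)
  have hroot : (C 2 + C 3 * X - X ^ 2 : ℝ[X]).IsRoot ((3 - √17) / 2) := by
    simp only [IsRoot, eval_sub, eval_add, eval_mul, eval_pow, eval_C, eval_X]
    linear_combination -ht / 4
  have hode : (C 2 + C 3 * X - X ^ 2) * derivative g = -(C (m : ℝ) * X + C (4 - m : ℝ)) * g := by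
    unfold paperBOp at hL; linear_combination hL
  have hind : -((m : ℝ) * ((3 - √17) / 2) + (4 - m)) =
      g.rootMultiplicity ((3 - √17) / 2) * (3 - 2 * ((3 - √17) / 2)) := by
    simpa [one_add_one_eq_two] using eval_eq_rootMultiplicity_mul_eval_derivative hg hroot hode
  set n := g.rootMultiplicity ((3 - √17) / 2)
  have hrat : ((m : ℝ) - 2 * n) * √17 = m + 8 := by linear_combination 2 * hind
  have hmn : (m : ℝ) - 2 * n ≠ 0 := by
    intro h0; rw [h0, zero_mul] at hrat; linarith
  refine (by norm_num : Nat.Prime 17).irrational_sqrt ⟨(m + 8) / (m - 2 * n), ?_⟩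
  push_cast
  field_simp
  linear_combination -hrat

theorem Fin.sum_univ_ite_val_eq {M : Type*} [AddCommMonoid M] (n k : ℕ) (a : M) :
    ∑ x : Fin n, (if (x : ℕ) = k then a else 0) = if k < n then a else 0 := by
  rw [Fin.sum_univ_eq_sum_range (fun j => if j = k then a else 0), Finset.sum_ite_eq']
  simp

theorem paperB_mulVec_zero (m : ℕ) (v : Fin (m + 1) → ℝ) :
    (paperB m *ᵥ v) 0 = (ofFn (m + 1) v).eval 1 + (derivative (ofFn (m + 1) v)).eval 1 := by
  simp only [mulVec, dotProduct, paperB, Fin.val_eq_zero_iff, of_apply, ↓reduceIte,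
    ofFn_eq_sum_monomial, eval_finsetSum, eval_monomial, one_pow, mul_one, map_sum,
    derivative_monomial, ← Finset.sum_add_distrib]
  refine Finset.sum_congr rfl fun j _ => by ring

theorem paperB_mulVec_succ (m k : ℕ) (hk : k + 1 < m + 1) (v : Fin (m + 1) → ℝ) :
    (paperB m *ᵥ v) ⟨k + 1, hk⟩ = (paperBOp m (ofFn (m + 1) v)).coeff (k + 1) := by
  set c := (ofFn (m + 1) v).coeff
  have hrow : ∀ x : Fin (m + 1), paperB m ⟨k + 1, hk⟩ x * v x =
      (if (x : ℕ) = k then (m - k) * c k else 0)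
        + (if (x : ℕ) = k + 1 then (3 * (k + 1) + 4 - m) * c (k + 1) else 0)
        + (if (x : ℕ) = k + 2 then 2 * (k + 2) * c (k + 2) else 0) := by
    rintro ⟨j, hj⟩
    rw [← ofFn_coeff_eq_val_of_lt v hj]
    simp only [paperB, of_apply]
    obtain rfl | rfl | rfl | ⟨h1, h2, h3⟩ :
        j = k ∨ j = k + 1 ∨ j = k + 2 ∨ (j ≠ k ∧ j ≠ k + 1 ∧ j ≠ k + 2) := by omega
    · simp [c]
    · simp [c]
    · simp [c, add_assoc, one_add_one_eq_two]
    · simp [h1, h2, h3, h1.symm, h2.symm]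
  simp only [mulVec, dotProduct, hrow, Finset.sum_add_distrib, Fin.sum_univ_ite_val_eq]
  rw [coeff_paperBOp_succ, if_pos (by omega), if_pos hk]
  split_ifs with hk2
  · rfl
  · simp [c, ofFn_coeff_eq_zero_of_ge v (not_lt.mp hk2)]

theorem paperBOp_ofFn_eq_zero_of_mulVec_eq_zero {m : ℕ} {v : Fin (m + 1) → ℝ}
    (hv : paperB m *ᵥ v = 0) : paperBOp m (ofFn (m + 1) v) = 0 := by
  set g := ofFn (m + 1) v
  have hcoeff : ∀ k, (paperBOp m g).coeff (k + 1) = 0 := by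
    intro k
    by_cases hk : k + 1 < m + 1
    · rw [← paperB_mulVec_succ m k hk, hv, Pi.zero_apply]
    · rw [coeff_paperBOp_succ, ofFn_coeff_eq_zero_of_ge v (by omega : m + 1 ≤ k + 1),
        ofFn_coeff_eq_zero_of_ge v (by omega : m + 1 ≤ k + 2)]
      obtain rfl | hkm := eq_or_ne k m
      · ring
      · rw [ofFn_coeff_eq_zero_of_ge v (by omega : m + 1 ≤ k)]; ring
  have hconst : paperBOp m g = C ((paperBOp m g).coeff 0) := by
    ext (_ | k) <;> simp [hcoeff]
  have hone : (paperBOp m g).eval 1 = 0 := by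
    rw [eval_one_paperBOp, ← paperB_mulVec_zero, hv, Pi.zero_apply, mul_zero]
  rw [hconst, eval_C] at hone
  rw [hconst, hone, C_0]

theorem det_paperB_ne_zero_general (m : ℕ) : (paperB m).det ≠ 0 := by
  intro hdet
  obtain ⟨v, hv0, hv⟩ := exists_mulVec_eq_zero_iff.mpr hdet
  have hg : ofFn (m + 1) v ≠ 0 := fun h => hv0 (injective_ofFn _ (h.trans (ofFn_zero _).symm))
  exact paperBOp_ne_zero m hg (paperBOp_ofFn_eq_zero_of_mulVec_eq_zero hv)

/-- The matrix `B_m` is nonsingular. -/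
theorem det_paperB_ne_zero (m : ℕ) (hm : 1 ≤ m) : (paperB m).det ≠ 0 :=
  det_paperB_ne_zero_general m
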